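/- Let ρ₁, ρ₂ be density matrices on ℂ^{n_A} ⊗ ℂ^{n_B} and let U be a unitary n_B×n_B matrix. If for every rank-one projection M on ℂ^{n_A} one has Tr_A((M ⊗ I_B) ρ₁) = U · Tr_A((M ⊗ I_B) ρ₂) · U†, then ρ₁ = (I_A ⊗ U) ρ₂ (I_A ⊗ U)†. (This is the content of the paper's Theorem 1: two states whose post-measurement conditional states on B always differ by the same local unitary on B are themselves related by that local unitary on B.) -/

import Mathlib

/-!
The conditional state `Tr_A((ψψ† ⊗ I) ρ)` has `(j, j')` entry `ψ† ρ⁽ʲʲ'⁾ ψ`, where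
`ρ⁽ʲʲ'⁾ = ρ((·, j), (·, j'))` is an `n_A × n_A` block of `ρ`. As `M ⊗ I` commutes with `I ⊗ U`
and `Tr_A` intertwines conjugation by `I ⊗ U` with conjugation by `U`, the hypothesis says that
every block of `ρ₁` and of `(I ⊗ U) ρ₂ (I ⊗ U)†` has the same quadratic form on unit vectors.
Over `ℂ` the quadratic form determines the matrix, by polarization.
-/

open Matrix
open scoped Matrix Kronecker ComplexOrder

/-- A density matrix: positive semidefinite with trace 1. -/
def IsDensityMatrix {n : Type*} [Fintype n] (ρ : Matrix n n ℂ) : Prop :=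
  ρ.PosSemidef ∧ ρ.trace = 1

/-- A rank-one projection on ℂⁿ: the outer product ψψ† of a unit vector ψ. -/
def IsRankOneProj {n : ℕ} (M : Matrix (Fin n) (Fin n) ℂ) : Prop :=
  ∃ ψ : Fin n → ℂ, (∑ i, star (ψ i) * ψ i) = 1 ∧ M = Matrix.vecMulVec ψ (star ψ)

/-- Partial trace over the first (A) factor. -/
noncomputable def ptraceA {nA nB : ℕ}
    (X : Matrix (Fin nA × Fin nB) (Fin nA × Fin nB) ℂ) :
    Matrix (Fin nB) (Fin nB) ℂ :=
  Matrix.of fun j j' => ∑ i, X (i, j) (i, j')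

theorem Matrix.commute_kronecker_one_one_kronecker {R l m : Type*} [CommSemiring R]
    [Fintype l] [DecidableEq l] [Fintype m] [DecidableEq m]
    (A : Matrix l l R) (B : Matrix m m R) :
    Commute (A ⊗ₖ (1 : Matrix m m R)) ((1 : Matrix l l R) ⊗ₖ B) := by
  rw [Commute, SemiconjBy, ← mul_kronecker_mul, ← mul_kronecker_mul]
  simp only [Matrix.mul_one, Matrix.one_mul]

theorem Matrix.eq_zero_of_forall_unit_star_dotProduct_mulVec_eq_zero {n : Type*} [Fintype n]
    {B : Matrix n n ℂ} (h : ∀ ψ : n → ℂ, star ψ ⬝ᵥ ψ = 1 → star ψ ⬝ᵥ B *ᵥ ψ = 0) :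
    B = 0 := by
  classical
  have hunit : ∀ x : EuclideanSpace ℂ n, ‖x‖ = 1 → inner ℂ x (toLpLin 2 2 B x) = 0 := by
    intro x hx
    have hx' : star x.ofLp ⬝ᵥ x.ofLp = 1 := by
      rw [dotProduct_comm, ← EuclideanSpace.inner_eq_star_dotProduct, inner_self_eq_norm_sq_to_K,
        hx]
      simp
    rw [EuclideanSpace.inner_eq_star_dotProduct, toLpLin_apply, dotProduct_comm]
    exact h _ hx'
  rw [← (toLpLin 2 2).map_eq_zero_iff, ← inner_map_self_eq_zero]
  intro x
  rw [← inner_conj_symm, map_eq_zero]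
  -- the form scales by `‖x‖²`, so it suffices to test unit vectors
  rcases eq_or_ne x 0 with rfl | hx
  · simp
  · have hnorm : ‖x‖ ≠ 0 := norm_ne_zero_iff.mpr hx
    have := hunit ((‖x‖⁻¹ : ℂ) • x) (by simp [norm_smul, hnorm])
    simpa [inner_smul_left, inner_smul_right, hnorm] using this

theorem Matrix.trace_vecMulVec_mul {R n : Type*} [CommSemiring R] [Fintype n] (u v : n → R)
    (B : Matrix n n R) :
    trace (vecMulVec u v * B) = v ⬝ᵥ B *ᵥ u := by
  rw [vecMulVec_mul, trace_vecMulVec, dotProduct_comm, dotProduct_mulVec]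

theorem ptraceA_kronecker_one_mul_apply {nA nB : ℕ} (M : Matrix (Fin nA) (Fin nA) ℂ)
    (X : Matrix (Fin nA × Fin nB) (Fin nA × Fin nB) ℂ) (j j' : Fin nB) :
    ptraceA ((M ⊗ₖ (1 : Matrix (Fin nB) (Fin nB) ℂ)) * X) j j'
      = trace (M * X.submatrix (·, j) (·, j')) := by
  simp [ptraceA, trace, mul_apply, Fintype.sum_prod_type, one_apply, ite_mul, mul_ite,
    Finset.sum_ite_eq]

theorem ptraceA_one_kronecker_mul_mul {nA nB : ℕ} (U V : Matrix (Fin nB) (Fin nB) ℂ)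
    (Y : Matrix (Fin nA × Fin nB) (Fin nA × Fin nB) ℂ) :
    ptraceA (((1 : Matrix (Fin nA) (Fin nA) ℂ) ⊗ₖ U) * Y * ((1 : Matrix (Fin nA) (Fin nA) ℂ) ⊗ₖ V))
      = U * ptraceA Y * V := by
  ext j j'
  simp only [ptraceA, mul_apply, of_apply, kroneckerMap_apply, one_apply, ite_mul, mul_ite,
    one_mul, zero_mul, mul_zero, Fintype.sum_prod_type, Finset.sum_ite_irrel,
    Finset.sum_const_zero, Finset.sum_ite_eq, Finset.sum_ite_eq', Finset.mem_univ, ↓reduceIte,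
    Finset.sum_mul, Finset.mul_sum]
  rw [Finset.sum_comm]
  exact Finset.sum_congr rfl fun _ _ => Finset.sum_comm

theorem eq_of_forall_ptraceA_rankOneProj_kronecker_one_mul_eq {nA nB : ℕ}
    {X Y : Matrix (Fin nA × Fin nB) (Fin nA × Fin nB) ℂ}
    (h : ∀ M : Matrix (Fin nA) (Fin nA) ℂ, IsRankOneProj M →
      ptraceA ((M ⊗ₖ (1 : Matrix (Fin nB) (Fin nB) ℂ)) * X) =
      ptraceA ((M ⊗ₖ (1 : Matrix (Fin nB) (Fin nB) ℂ)) * Y)) :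
    X = Y := by
  ext ⟨a, j⟩ ⟨i, j'⟩
  suffices X.submatrix (·, j) (·, j') - Y.submatrix (·, j) (·, j') = 0 from
    sub_eq_zero.mp (congrFun₂ this a i)
  refine eq_zero_of_forall_unit_star_dotProduct_mulVec_eq_zero fun ψ hψ => ?_
  have hψj := congrFun₂ (h _ ⟨ψ, hψ, rfl⟩) j j'
  rw [ptraceA_kronecker_one_mul_apply, ptraceA_kronecker_one_mul_apply,
    trace_vecMulVec_mul, trace_vecMulVec_mul] at hψj
  rw [sub_mulVec, dotProduct_sub, hψj, sub_self]

theorem stmt_2_general {nA nB : ℕ}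
    (ρ₁ ρ₂ : Matrix (Fin nA × Fin nB) (Fin nA × Fin nB) ℂ)
    (U : Matrix (Fin nB) (Fin nB) ℂ)
    (h : ∀ M : Matrix (Fin nA) (Fin nA) ℂ, IsRankOneProj M →
      ptraceA ((M ⊗ₖ (1 : Matrix (Fin nB) (Fin nB) ℂ)) * ρ₁) =
      U * ptraceA ((M ⊗ₖ (1 : Matrix (Fin nB) (Fin nB) ℂ)) * ρ₂) * Uᴴ) :
    ρ₁ = ((1 : Matrix (Fin nA) (Fin nA) ℂ) ⊗ₖ U) * ρ₂ *
      ((1 : Matrix (Fin nA) (Fin nA) ℂ) ⊗ₖ U)ᴴ := by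
  refine eq_of_forall_ptraceA_rankOneProj_kronecker_one_mul_eq fun M hM => ?_
  rw [h M hM, conjTranspose_kronecker, conjTranspose_one, ← Matrix.mul_assoc, ← Matrix.mul_assoc,
    (commute_kronecker_one_one_kronecker M U).eq, Matrix.mul_assoc _ _ ρ₂,
    ptraceA_one_kronecker_mul_mul]

theorem stmt_2 {nA nB : ℕ}
    (ρ₁ ρ₂ : Matrix (Fin nA × Fin nB) (Fin nA × Fin nB) ℂ)
    (h₁ : IsDensityMatrix ρ₁) (h₂ : IsDensityMatrix ρ₂)
    (U : Matrix (Fin nB) (Fin nB) ℂ)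
    (hU : U ∈ Matrix.unitaryGroup (Fin nB) ℂ)
    (h : ∀ M : Matrix (Fin nA) (Fin nA) ℂ, IsRankOneProj M →
      ptraceA ((M ⊗ₖ (1 : Matrix (Fin nB) (Fin nB) ℂ)) * ρ₁) =
      U * ptraceA ((M ⊗ₖ (1 : Matrix (Fin nB) (Fin nB) ℂ)) * ρ₂) * Uᴴ) :
    ρ₁ = ((1 : Matrix (Fin nA) (Fin nA) ℂ) ⊗ₖ U) * ρ₂ *
      ((1 : Matrix (Fin nA) (Fin nA) ℂ) ⊗ₖ U)ᴴ :=
  stmt_2_general ρ₁ ρ₂ U h
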